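/- For real $t_x,t_y,t_2$ and $q=(q_x,q_y)\in\mathbb{R}^2$, define the $8\times8$ Dirac Hamiltonian $H^D(q) = t_x q_x\,\sigma_0\otimes\tau_y\otimes\mu_0 \; - \; 2t_y q_y\,\sigma_0\otimes\tau_z\otimes\mu_z \; - \; 2t_2\,\sigma_z\otimes\tau_x\otimes\mu_z$, and the symmetry representations $R_{\tilde T_y} = i\,\sigma_0\otimes\tau_0\otimes\mu_z$, $R_{\tilde T_x} = i\,\sigma_0\otimes\tau_y\otimes\mu_x$, $R_{\mathcal T} = i\,\sigma_y\otimes\tau_0\otimes\mu_x$ (time reversal being $R_{\mathcal T}$ followed by complex conjugation). Then for every $q$: (i) $R_{\tilde T_y} H^D(q) R_{\tilde T_y}^{-1} = H^D(q)$; (ii) $R_{\tilde T_x} H^D(q) R_{\tilde T_x}^{-1} = H^D(q)$; (iii) $R_{\mathcal T}\,\overline{H^D(q)}\,R_{\mathcal T}^{-1} = H^D(-q)$, where $\overline{M}$ is entrywise complex conjugation. Hence $H^D$ is invariant under magnetic translations and time reversal. -/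
import Mathlib


open Matrix Kronecker

/-- Pauli matrices (and identity) as `2×2` complex matrices. -/
def pauli0 : Matrix (Fin 2) (Fin 2) ℂ := 1
def pauliX : Matrix (Fin 2) (Fin 2) ℂ := !![0, 1; 1, 0]
def pauliY : Matrix (Fin 2) (Fin 2) ℂ := !![0, -Complex.I; Complex.I, 0]
def pauliZ : Matrix (Fin 2) (Fin 2) ℂ := !![1, 0; 0, -1]

/-- The `8×8` low-energy Dirac Hamiltonian of the square-lattice `π`-flux model
near the two valleys:
`H^D(q) = t_x q_x σ₀⊗τ_y⊗μ₀ - 2 t_y q_y σ₀⊗τ_z⊗μ_z - 2 t₂ σ_z⊗τ_x⊗μ_z`. -/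
noncomputable def diracH (tx ty t2 : ℝ) (q : ℝ × ℝ) :
    Matrix ((Fin 2 × Fin 2) × Fin 2) ((Fin 2 × Fin 2) × Fin 2) ℂ :=
  ((tx * q.1 : ℝ) : ℂ) • (pauli0 ⊗ₖ pauliY ⊗ₖ pauli0) +
    ((-(2 * ty * q.2) : ℝ) : ℂ) • (pauli0 ⊗ₖ pauliZ ⊗ₖ pauliZ) +
    ((-(2 * t2) : ℝ) : ℂ) • (pauliZ ⊗ₖ pauliX ⊗ₖ pauliZ)

/-- Representation of the magnetic translation `T̃_y`: `R = i μ_z`. -/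
noncomputable def RTy : Matrix ((Fin 2 × Fin 2) × Fin 2) ((Fin 2 × Fin 2) × Fin 2) ℂ :=
  Complex.I • (pauli0 ⊗ₖ pauli0 ⊗ₖ pauliZ)

/-- Representation of the magnetic translation `T̃_x`: `R = i τ_y μ_x`. -/
noncomputable def RTx : Matrix ((Fin 2 × Fin 2) × Fin 2) ((Fin 2 × Fin 2) × Fin 2) ℂ :=
  Complex.I • (pauli0 ⊗ₖ pauliY ⊗ₖ pauliX)

/-- Unitary part of time reversal `T = R_T K`: `R_T = i σ_y μ_x`. -/
noncomputable def RT : Matrix ((Fin 2 × Fin 2) × Fin 2) ((Fin 2 × Fin 2) × Fin 2) ℂ :=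
  Complex.I • (pauliY ⊗ₖ pauli0 ⊗ₖ pauliX)

section helpers
open Complex

lemma pauli0_eq : pauli0 = !![1,0;0,1] := by simp [pauli0, Matrix.one_fin_two]

lemma pX_sq : pauliX * pauliX = 1 := by
  rw [← pauli0, pauli0_eq]; norm_num [pauliX, Matrix.mul_fin_two]
lemma pY_sq : pauliY * pauliY = 1 := by
  rw [← pauli0, pauli0_eq]; norm_num [pauliY, Matrix.mul_fin_two, Complex.ext_iff]
lemma pZ_sq : pauliZ * pauliZ = 1 := by
  rw [← pauli0, pauli0_eq]; norm_num [pauliZ, Matrix.mul_fin_two]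
lemma p0_mul (M : Matrix (Fin 2) (Fin 2) ℂ) : pauli0 * M = M := by simp [pauli0]
lemma mul_p0 (M : Matrix (Fin 2) (Fin 2) ℂ) : M * pauli0 = M := by simp [pauli0]
lemma XZX : pauliX * pauliZ * pauliX = -pauliZ := by
  norm_num [pauliX, pauliZ, Matrix.mul_fin_two]
lemma YZY : pauliY * pauliZ * pauliY = -pauliZ := by
  norm_num [pauliY, pauliZ, Matrix.mul_fin_two, Complex.ext_iff]
lemma YXY : pauliY * pauliX * pauliY = -pauliX := by
  norm_num [pauliY, pauliX, Matrix.mul_fin_two, Complex.ext_iff]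

lemma neg_kron {l m n p : Type*} (A : Matrix l m ℂ) (B : Matrix n p ℂ) :
    (-A) ⊗ₖ B = -(A ⊗ₖ B) := by
  ext ⟨i,j⟩ ⟨k,r⟩; simp [Matrix.kroneckerMap_apply]
lemma kron_neg {l m n p : Type*} (A : Matrix l m ℂ) (B : Matrix n p ℂ) :
    A ⊗ₖ (-B) = -(A ⊗ₖ B) := by
  ext ⟨i,j⟩ ⟨k,r⟩; simp [Matrix.kroneckerMap_apply]

lemma map_kron {l m n p : Type*} (A : Matrix l m ℂ) (B : Matrix n p ℂ) :
    (A ⊗ₖ B).map (starRingEnd ℂ) = A.map (starRingEnd ℂ) ⊗ₖ B.map (starRingEnd ℂ) := by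
  ext ⟨i,j⟩ ⟨k,r⟩; simp [Matrix.kroneckerMap_apply]

lemma map_rsmul {I : Type*} (r : ℝ) (M : Matrix I I ℂ) :
    ((r : ℂ) • M).map (starRingEnd ℂ) = (r : ℂ) • M.map (starRingEnd ℂ) := by
  ext i j; simp

lemma map_add' {I : Type*} (M N : Matrix I I ℂ) :
    (M + N).map (starRingEnd ℂ) = M.map (starRingEnd ℂ) + N.map (starRingEnd ℂ) := by
  ext i j; simp

lemma map_p0 : pauli0.map (starRingEnd ℂ) = pauli0 := by
  rw [pauli0_eq]; ext i j; fin_cases i <;> fin_cases j <;> simp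
lemma map_pX : pauliX.map (starRingEnd ℂ) = pauliX := by
  ext i j; fin_cases i <;> fin_cases j <;> simp [pauliX]
lemma map_pZ : pauliZ.map (starRingEnd ℂ) = pauliZ := by
  ext i j; fin_cases i <;> fin_cases j <;> simp [pauliZ]
lemma map_pY : pauliY.map (starRingEnd ℂ) = -pauliY := by
  ext i j; fin_cases i <;> fin_cases j <;> simp [pauliY]

/-- Triple Kronecker multiplication. -/
lemma kmul (A B C D E F : Matrix (Fin 2) (Fin 2) ℂ) :
    (A ⊗ₖ B ⊗ₖ C) * (D ⊗ₖ E ⊗ₖ F) = (A*D) ⊗ₖ (B*E) ⊗ₖ (C*F) := by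
  rw [Matrix.mul_kronecker_mul, Matrix.mul_kronecker_mul]

/-- Conjugation of one Hamiltonian term by `i • N` where `N = A⊗B⊗C`. -/
lemma conj3 (c : ℂ) (A B C D E F : Matrix (Fin 2) (Fin 2) ℂ) :
    (Complex.I • (A ⊗ₖ B ⊗ₖ C)) * (c • (D ⊗ₖ E ⊗ₖ F)) * (-(Complex.I • (A ⊗ₖ B ⊗ₖ C)))
      = c • ((A*D*A) ⊗ₖ (B*E*B) ⊗ₖ (C*F*C)) := by
  simp only [Matrix.smul_mul, Matrix.mul_smul, Matrix.mul_neg, smul_neg, smul_smul]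
  rw [kmul, kmul, ← neg_smul,
    show -(Complex.I * (c * Complex.I)) = c by linear_combination (-c) * Complex.I_sq]

lemma inv_of_iN (N : Matrix ((Fin 2 × Fin 2) × Fin 2) ((Fin 2 × Fin 2) × Fin 2) ℂ)
    (h : N * N = 1) : (Complex.I • N)⁻¹ = -(Complex.I • N) := by
  apply Matrix.inv_eq_right_inv
  rw [Matrix.mul_neg, Matrix.smul_mul, Matrix.mul_smul, h, smul_smul, Complex.I_mul_I]
  simp

lemma one_kron3 : (pauli0 ⊗ₖ pauli0 ⊗ₖ pauli0 :
    Matrix ((Fin 2 × Fin 2) × Fin 2) ((Fin 2 × Fin 2) × Fin 2) ℂ) = 1 := by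
  rw [pauli0]; rw [Matrix.one_kronecker_one, Matrix.one_kronecker_one]

end helpers

/-- The Dirac Hamiltonian of the `π`-flux model is invariant under the
magnetic translations and time reversal:
(i) `R_{T̃y} H^D(q) R_{T̃y}⁻¹ = H^D(q)`;
(ii) `R_{T̃x} H^D(q) R_{T̃x}⁻¹ = H^D(q)`;
(iii) `R_T H̄^D(q) R_T⁻¹ = H^D(-q)` (with entrywise complex conjugation). -/
theorem diracH_symmetries (tx ty t2 : ℝ) (q : ℝ × ℝ) :
    RTy * diracH tx ty t2 q * RTy⁻¹ = diracH tx ty t2 q ∧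
    RTx * diracH tx ty t2 q * RTx⁻¹ = diracH tx ty t2 q ∧
    RT * (diracH tx ty t2 q).map (starRingEnd ℂ) * RT⁻¹ = diracH tx ty t2 (-q) := by
  have hsq : ∀ A B C : Matrix (Fin 2) (Fin 2) ℂ, A * A = 1 → B * B = 1 → C * C = 1 →
      (A ⊗ₖ B ⊗ₖ C) * (A ⊗ₖ B ⊗ₖ C) = 1 := by
    intro A B C hA hB hC
    rw [kmul, hA, hB, hC, Matrix.one_kronecker_one, Matrix.one_kronecker_one]
  have hy : RTy⁻¹ = -RTy := by
    rw [RTy]; exact inv_of_iN _ (hsq _ _ _ (by rw [pauli0]; simp) (by rw [pauli0]; simp) pZ_sq)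
  have hx : RTx⁻¹ = -RTx := by
    rw [RTx]; exact inv_of_iN _ (hsq _ _ _ (by rw [pauli0]; simp) pY_sq pX_sq)
  have ht : RT⁻¹ = -RT := by
    rw [RT]; exact inv_of_iN _ (hsq _ _ _ pY_sq (by rw [pauli0]; simp) pX_sq)
  refine ⟨?_, ?_, ?_⟩
  · rw [hy, RTy, diracH]
    rw [Matrix.mul_add, Matrix.mul_add, Matrix.add_mul, Matrix.add_mul,
      conj3, conj3, conj3]
    simp only [pauli0, Matrix.one_mul, Matrix.mul_one, pZ_sq, pX_sq, pY_sq, XZX, YZY, YXY,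
      neg_kron, kron_neg, smul_neg, neg_neg, ← neg_smul]
  · rw [hx, RTx, diracH]
    rw [Matrix.mul_add, Matrix.mul_add, Matrix.add_mul, Matrix.add_mul,
      conj3, conj3, conj3]
    simp only [pauli0, Matrix.one_mul, Matrix.mul_one, pZ_sq, pX_sq, pY_sq, XZX, YZY, YXY,
      neg_kron, kron_neg, smul_neg, neg_neg, ← neg_smul]
  · rw [ht, RT, diracH]
    rw [map_add', map_add', map_rsmul, map_rsmul, map_rsmul,
      map_kron, map_kron, map_kron, map_kron, map_kron, map_kron,
      map_p0, map_pX, map_pY, map_pZ]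
    rw [Matrix.mul_add, Matrix.mul_add, Matrix.add_mul, Matrix.add_mul,
      conj3, conj3, conj3]
    rw [diracH]
    rw [show ((tx * (-q).1 : ℝ) : ℂ) = -((tx * q.1 : ℝ) : ℂ) by simp only [Prod.fst_neg]; push_cast; ring,
      show ((-(2 * ty * (-q).2) : ℝ) : ℂ) = -((-(2 * ty * q.2) : ℝ) : ℂ) by simp only [Prod.snd_neg]; push_cast; ring]
    simp only [pauli0, Matrix.one_mul, Matrix.mul_one, pZ_sq, pX_sq, pY_sq, XZX, YZY, YXY,
      neg_kron, kron_neg, smul_neg, neg_neg, ← neg_smul]
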